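/- arXiv:2007.11748 — 4 statements merged into one kernel-verified Lean document; each statement's English description precedes it below -/
import Mathlib

section
/- Let n ≥ 1 be a natural number and x_1, …, x_n real numbers. The following are equivalent: (A) for every choice of nonnegative real numbers p_1, …, p_n with ∑_{i=1}^n p_i = 1 one has ∑_{i=1}^n p_i x_i ≥ -∑_{i=1}^n p_i log p_i; (B) ∑_{i=1}^n e^{-x_i} ≤ 1. -/
/-!
If `∑ exp (-xᵢ) ≤ 1`, the pointwise bound `p - exp (-x) ≤ p log p + p x` (a rescaling of
`t - 1 ≤ t log t`) sums to `∑ pᵢ xᵢ + ∑ pᵢ log pᵢ ≥ 1 - ∑ exp (-xᵢ) ≥ 0`. Conversely, the Gibbs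
distribution `pᵢ = exp (-xᵢ) / Z` with `Z = ∑ exp (-xᵢ)` makes `∑ pᵢ xᵢ + ∑ pᵢ log pᵢ = -log Z`,
so the inequality for it forces `Z ≤ 1`.
-/

open Real Finset

lemma sub_exp_neg_le_mul_log_add_mul {p : ℝ} (hp : 0 ≤ p) (x : ℝ) :
    p - exp (-x) ≤ p * log p + p * x := by
  rcases hp.eq_or_lt with rfl | hp
  · simp [(exp_pos _).le]
  have hlog : log (p * exp x) = log p + x := by
    rw [log_mul hp.ne' (exp_pos x).ne', log_exp]
  have key := self_sub_one_le_mul_log (mul_nonneg hp.le (exp_pos x).le)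
  rw [hlog] at key
  have hscale := mul_le_mul_of_nonneg_right key (exp_pos (-x)).le
  calc p - exp (-x) = (p * exp x - 1) * exp (-x) := by
          rw [sub_mul, mul_assoc, ← exp_add, add_neg_cancel, exp_zero, mul_one, one_mul]
    _ ≤ p * exp x * (log p + x) * exp (-x) := hscale
    _ = p * log p + p * x := by
          rw [mul_right_comm, mul_assoc p, ← exp_add, add_neg_cancel, exp_zero, mul_one, mul_add]

section

variable {ι : Type*} [Fintype ι] (x : ι → ℝ)

lemma one_sub_sum_exp_neg_le {p : ι → ℝ} (hp0 : ∀ i, 0 ≤ p i) (hp1 : ∑ i, p i = 1) :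
    1 - ∑ i, exp (-x i) ≤ ∑ i, p i * log (p i) + ∑ i, p i * x i := by
  rw [← hp1, ← sum_sub_distrib, ← sum_add_distrib]
  exact sum_le_sum fun i _ ↦ sub_exp_neg_le_mul_log_add_mul (hp0 i) (x i)

lemma sum_exp_neg_pos [Nonempty ι] : 0 < ∑ i, exp (-x i) :=
  sum_pos (fun _ _ ↦ exp_pos _) univ_nonempty

noncomputable def gibbs (i : ι) : ℝ := exp (-x i) / ∑ j, exp (-x j)

lemma gibbs_nonneg (i : ι) : 0 ≤ gibbs x i :=
  div_nonneg (exp_pos _).le (sum_nonneg fun _ _ ↦ (exp_pos _).le)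

lemma sum_gibbs [Nonempty ι] : ∑ i, gibbs x i = 1 := by
  simp only [gibbs]
  rw [← sum_div, div_self (sum_exp_neg_pos x).ne']

lemma log_gibbs [Nonempty ι] (i : ι) : log (gibbs x i) = -x i - log (∑ j, exp (-x j)) := by
  rw [gibbs, log_div (exp_pos _).ne' (sum_exp_neg_pos x).ne', log_exp]

lemma sum_gibbs_mul_log_add_sum_gibbs_mul [Nonempty ι] :
    ∑ i, gibbs x i * log (gibbs x i) + ∑ i, gibbs x i * x i = -log (∑ i, exp (-x i)) := by
  rw [← sum_add_distrib]
  calc ∑ i, (gibbs x i * log (gibbs x i) + gibbs x i * x i)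
      = ∑ i, -(gibbs x i * log (∑ j, exp (-x j))) :=
        sum_congr rfl fun i _ ↦ by rw [log_gibbs]; ring
    _ = -log (∑ i, exp (-x i)) := by rw [sum_neg_distrib, ← sum_mul, sum_gibbs, one_mul]

end

theorem landauer_formulations_equivalent_general (n : ℕ) (x : Fin n → ℝ) :
    (∀ p : Fin n → ℝ, (∀ i, 0 ≤ p i) → ∑ i, p i = 1 →
      ∑ i, p i * x i ≥ -∑ i, p i * Real.log (p i)) ↔
    ∑ i, Real.exp (-x i) ≤ 1 := by
  refine ⟨fun hA ↦ ?_, fun hB p hp0 hp1 ↦ ?_⟩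
  · rcases isEmpty_or_nonempty (Fin n) with _ | _
    · simp
    have hGibbs := hA (gibbs x) (gibbs_nonneg x) (sum_gibbs x)
    have hlog : log (∑ i, exp (-x i)) ≤ 0 := by
      linarith [sum_gibbs_mul_log_add_sum_gibbs_mul x]
    exact (log_nonpos_iff (sum_exp_neg_pos x).le).1 hlog
  · linarith [one_sub_sum_exp_neg_le x hp0 hp1]

/-- Lemma (equivalence of two formulations of the Landauer bound):
For `n ≥ 1` real numbers `x i`, the following are equivalent:
(A) for every probability vector `p`, `∑ p i * x i ≥ -∑ p i * log (p i)`;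
(B) `∑ exp (-x i) ≤ 1`.
(Note: `Real.log 0 = 0` in Mathlib, matching the convention `0 · log 0 = 0`.) -/
theorem landauer_formulations_equivalent (n : ℕ) (hn : 1 ≤ n) (x : Fin n → ℝ) :
    (∀ p : Fin n → ℝ, (∀ i, 0 ≤ p i) → ∑ i, p i = 1 →
      ∑ i, p i * x i ≥ -∑ i, p i * Real.log (p i)) ↔
    ∑ i, Real.exp (-x i) ≤ 1 :=
  landauer_formulations_equivalent_general n x
end

section
/- Let (X, μ) be a σ-finite measure space, H : X → ℝ measurable, and β > 0, with partition function Z = ∫ e^{-βH} dμ ∈ (0, ∞); let g = Z⁻¹ e^{-βH} be the canonical density. Then for every probability density f on X such that H·f and f·log f are μ-integrable, one has ∫ H f dμ - β⁻¹ S[f] ≥ -β⁻¹ log Z; moreover, if H·g is μ-integrable then g attains this minimum: ∫ H g dμ - β⁻¹ S[g] = -β⁻¹ log Z. In particular the canonical distribution minimizes ⟨H⟩_ρ - T S[ρ] (with T = 1/β) among all probability densities. -/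
/-!
Gibbs' inequality `a - b ≤ a log a - a log b` (for `a ≥ 0`, `b > 0`), integrated against two
probability densities `f` and `g`, says that the cross entropy `-∫ f log g` dominates the entropy
`-∫ f log f`. For the canonical density `log g = -log Z - β H`, so the cross entropy is
`log Z + β ⟨H⟩_f`, which turns Gibbs' inequality into the free-energy bound; for `f = g` the two
entropies coincide and the bound is attained.
-/

open MeasureTheory Real

lemma sub_le_mul_log_sub_mul_log {a b : ℝ} (ha : 0 ≤ a) (hb : 0 < b) :
    a - b ≤ a * log a - a * log b := by
  rcases ha.eq_or_lt with rfl | ha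
  · simpa using hb.le
  · have h := mul_le_mul_of_nonneg_left (log_le_sub_one_of_pos (div_pos hb ha)) ha.le
    rw [log_div hb.ne' ha.ne', mul_sub, mul_sub, mul_div_cancel₀ _ ha.ne'] at h
    linarith

section Gibbs

variable {X : Type*} [MeasurableSpace X] {μ : Measure X} {f g : X → ℝ}

theorem integral_mul_log_le_integral_mul_log (hf0 : 0 ≤ᵐ[μ] f) (hg : ∀ᵐ x ∂μ, 0 < g x)
    (hfi : Integrable f μ) (hgi : Integrable g μ) (hfg : ∫ x, f x ∂μ = ∫ x, g x ∂μ)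
    (hflogf : Integrable (fun x => f x * log (f x)) μ)
    (hflogg : Integrable (fun x => f x * log (g x)) μ) :
    ∫ x, f x * log (g x) ∂μ ≤ ∫ x, f x * log (f x) ∂μ := by
  have h := integral_mono_ae (hfi.sub hgi) (hflogf.sub hflogg) <| by
    filter_upwards [hf0, hg] with x hfx hgx using sub_le_mul_log_sub_mul_log hfx hgx
  simp only [Pi.sub_apply] at h
  rw [integral_sub hfi hgi, integral_sub hflogf hflogg, hfg, sub_self] at h
  linarith

end Gibbs

lemma log_inv_mul_exp {Z : ℝ} (hZ : 0 < Z) (y : ℝ) : log (Z⁻¹ * exp y) = -log Z + y := by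
  rw [log_mul (inv_ne_zero hZ.ne') (exp_ne_zero _), log_inv, log_exp]

lemma mul_log_canonical_eq {X : Type*} {H f : X → ℝ} {β Z : ℝ} (hZ : 0 < Z) :
    (fun x => f x * log (Z⁻¹ * exp (-β * H x))) = fun x => -log Z * f x - β * (H x * f x) := by
  funext x
  rw [log_inv_mul_exp hZ]
  ring

section Canonical

variable {X : Type*} [MeasurableSpace X] {μ : Measure X} {H f : X → ℝ} {β Z : ℝ}

lemma integrable_mul_log_canonical (hZ : 0 < Z) (hf : Integrable f μ)
    (hHf : Integrable (fun x => H x * f x) μ) :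
    Integrable (fun x => f x * log (Z⁻¹ * exp (-β * H x))) μ := by
  rw [mul_log_canonical_eq hZ]
  exact (hf.const_mul _).sub (hHf.const_mul β)

lemma integral_mul_log_canonical (hZ : 0 < Z) (hf : Integrable f μ) (hf1 : ∫ x, f x ∂μ = 1)
    (hHf : Integrable (fun x => H x * f x) μ) :
    ∫ x, f x * log (Z⁻¹ * exp (-β * H x)) ∂μ = -log Z - β * ∫ x, H x * f x ∂μ := by
  rw [mul_log_canonical_eq hZ, integral_sub (hf.const_mul _) (hHf.const_mul β),
    integral_const_mul, integral_const_mul, hf1, mul_one]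

end Canonical

theorem canonical_minimizes_free_energy_general {X : Type*} [MeasurableSpace X]
    (μ : Measure X)
    (H : X → ℝ) (β : ℝ) (hβ : 0 < β)
    (hexp : Integrable (fun x => Real.exp (-β * H x)) μ)
    (Z : ℝ) (hZ : Z = ∫ x, Real.exp (-β * H x) ∂μ) (hZpos : 0 < Z)
    (g : X → ℝ) (hg : g = fun x => Z⁻¹ * Real.exp (-β * H x)) :
    (∀ f : X → ℝ, Measurable f → (∀ x, 0 ≤ f x) → Integrable f μ →
      (∫ x, f x ∂μ) = 1 →
      Integrable (fun x => H x * f x) μ →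
      Integrable (fun x => f x * Real.log (f x)) μ →
      (∫ x, H x * f x ∂μ) - β⁻¹ * (-∫ x, f x * Real.log (f x) ∂μ) ≥
        -β⁻¹ * Real.log Z) ∧
    (Integrable (fun x => H x * g x) μ →
      (∫ x, H x * g x ∂μ) - β⁻¹ * (-∫ x, g x * Real.log (g x) ∂μ) =
        -β⁻¹ * Real.log Z) := by
  subst hg
  have hgi : Integrable (fun x => Z⁻¹ * exp (-β * H x)) μ := hexp.const_mul _
  have hg1 : ∫ x, Z⁻¹ * exp (-β * H x) ∂μ = 1 := by
    rw [integral_const_mul, ← hZ, inv_mul_cancel₀ hZpos.ne']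
  refine ⟨fun f _ hf0 hfi hf1 hHf hflogf => ?_, fun hHg => ?_⟩
  · have hgibbs := integral_mul_log_le_integral_mul_log (ae_of_all μ hf0)
      (ae_of_all μ fun x => by positivity) hfi hgi (hf1.trans hg1.symm) hflogf
      (integrable_mul_log_canonical hZpos hfi hHf)
    rw [integral_mul_log_canonical hZpos hfi hf1 hHf] at hgibbs
    have hscaled := mul_le_mul_of_nonneg_left hgibbs (inv_nonneg.2 hβ.le)
    rw [ge_iff_le]
    field_simp at hscaled ⊢
    linarith
  · beta_reduce at hHg ⊢
    rw [integral_mul_log_canonical hZpos hgi hg1 hHg]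
    generalize ∫ x, H x * (Z⁻¹ * exp (-β * H x)) ∂μ = E
    field_simp
    ring

/-- The canonical distribution minimizes the free energy `⟨H⟩_ρ - T S[ρ]` (with `T = 1/β`,
`S[f] = -∫ f log f dμ`) among probability densities: every density `f` with `H·f` and
`f·log f` integrable satisfies `∫ H f dμ - β⁻¹ S[f] ≥ -β⁻¹ log Z`, and the canonical
density `g = Z⁻¹ e^{-βH}` attains the minimum `-β⁻¹ log Z`. -/
theorem canonical_minimizes_free_energy {X : Type*} [MeasurableSpace X]
    (μ : Measure X) [SigmaFinite μ]
    (H : X → ℝ) (hH : Measurable H) (β : ℝ) (hβ : 0 < β)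
    (hexp : Integrable (fun x => Real.exp (-β * H x)) μ)
    (Z : ℝ) (hZ : Z = ∫ x, Real.exp (-β * H x) ∂μ) (hZpos : 0 < Z)
    (g : X → ℝ) (hg : g = fun x => Z⁻¹ * Real.exp (-β * H x)) :
    (∀ f : X → ℝ, Measurable f → (∀ x, 0 ≤ f x) → Integrable f μ →
      (∫ x, f x ∂μ) = 1 →
      Integrable (fun x => H x * f x) μ →
      Integrable (fun x => f x * Real.log (f x)) μ →
      (∫ x, H x * f x ∂μ) - β⁻¹ * (-∫ x, f x * Real.log (f x) ∂μ) ≥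
        -β⁻¹ * Real.log Z) ∧
    (Integrable (fun x => H x * g x) μ →
      (∫ x, H x * g x ∂μ) - β⁻¹ * (-∫ x, g x * Real.log (g x) ∂μ) =
        -β⁻¹ * Real.log Z) :=
  canonical_minimizes_free_energy_general μ H β hβ hexp Z hZ hZpos g hg
end

section
/- Let (X, μ) and (Y, ν) be σ-finite measure spaces and let f be a probability density on X × Y with respect to the product measure μ ⊗ ν, with marginal densities f_X(x) = ∫ f(x, y) dν(y) and f_Y(y) = ∫ f(x, y) dμ(x). Assume f·log f, f_X·log f_X, and f_Y·log f_Y are integrable. Then S[f] ≤ S[f_X] + S[f_Y], with equality if and only if f(x, y) = f_X(x) f_Y(y) for (μ ⊗ ν)-almost every (x, y) (i.e., the two subsystems are probabilistically independent). -/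
/-!
Let `g x y = fX x * fY y`. Gibbs' inequality `∫ f log g ≤ ∫ f log f` holds for any two densities
with `∫ f = ∫ g` and `f = 0` a.e. where `g = 0`: the defect is `∫ g · klFun (f / g) ≥ 0`, and
it vanishes iff `f = g` a.e. because `klFun` vanishes only at `1`. Since `f` vanishes a.e. on the
fibres over zeros of either marginal, `log g = log fX + log fY` wherever it matters, so Fubini turns
`∫ f log g` into `∫ fX log fX + ∫ fY log fY`.
-/

open MeasureTheory Real InformationTheory

lemma mul_klFun_div_eq {a b : ℝ} (hab : b = 0 → a = 0) :
    b * klFun (a / b) = a * log a - a * log b - a + b := by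
  rcases eq_or_ne a 0 with rfl | ha
  · simp [klFun]
  have hb : b ≠ 0 := fun hb => ha (hab hb)
  rw [klFun, log_div ha hb]
  field_simp
  ring

lemma mul_klFun_div_eq_zero_iff {a b : ℝ} (ha : 0 ≤ a) (hb : 0 ≤ b) (hab : b = 0 → a = 0) :
    b * klFun (a / b) = 0 ↔ a = b := by
  rcases hb.eq_or_lt with rfl | hb
  · simp [hab rfl]
  rw [mul_eq_zero, klFun_eq_zero_iff (by positivity), div_eq_one_iff_eq hb.ne']
  simp [hb.ne']

lemma mul_klFun_div_nonneg {a b : ℝ} (ha : 0 ≤ a) (hb : 0 ≤ b) : 0 ≤ b * klFun (a / b) :=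
  mul_nonneg hb (klFun_nonneg (div_nonneg ha hb))

section Gibbs

variable {α : Type*} [MeasurableSpace α] {μ : Measure α} {f g : α → ℝ}

lemma integral_mul_klFun_div (hgf : ∀ᵐ x ∂μ, g x = 0 → f x = 0)
    (hfi : Integrable f μ) (hgi : Integrable g μ)
    (hflogf : Integrable (fun x => f x * log (f x)) μ)
    (hflogg : Integrable (fun x => f x * log (g x)) μ) (hfg : ∫ x, f x ∂μ = ∫ x, g x ∂μ) :
    Integrable (fun x => g x * klFun (f x / g x)) μ ∧
      ∫ x, g x * klFun (f x / g x) ∂μ = ∫ x, f x * log (f x) ∂μ - ∫ x, f x * log (g x) ∂μ := by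
  have hae : (fun x => g x * klFun (f x / g x)) =ᵐ[μ]
      fun x => f x * log (f x) - f x * log (g x) - f x + g x :=
    hgf.mono fun x => mul_klFun_div_eq
  have hlog : Integrable (fun x => f x * log (f x) - f x * log (g x)) μ := hflogf.sub hflogg
  have hlog' : Integrable (fun x => f x * log (f x) - f x * log (g x) - f x) μ := hlog.sub hfi
  refine ⟨(hlog'.add hgi).congr hae.symm, ?_⟩
  rw [integral_congr_ae hae, integral_add hlog' hgi, integral_sub hlog hfi,
    integral_sub hflogf hflogg, hfg]
  ring

variable (hf0 : ∀ᵐ x ∂μ, 0 ≤ f x) (hg0 : ∀ᵐ x ∂μ, 0 ≤ g x) (hgf : ∀ᵐ x ∂μ, g x = 0 → f x = 0)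
  (hfi : Integrable f μ) (hgi : Integrable g μ)
  (hflogf : Integrable (fun x => f x * log (f x)) μ)
  (hflogg : Integrable (fun x => f x * log (g x)) μ) (hfg : ∫ x, f x ∂μ = ∫ x, g x ∂μ)
include hf0 hg0 hgf hfi hgi hflogf hflogg hfg

theorem integral_mul_log_le_integral_mul_log_s6 :
    ∫ x, f x * log (g x) ∂μ ≤ ∫ x, f x * log (f x) ∂μ := by
  have := integral_nonneg_of_ae (μ := μ) (f := fun x => g x * klFun (f x / g x)) <|
    hf0.and hg0 |>.mono fun x ⟨hf, hg⟩ => mul_klFun_div_nonneg hf hg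
  rw [(integral_mul_klFun_div hgf hfi hgi hflogf hflogg hfg).2] at this
  linarith

theorem integral_mul_log_eq_integral_mul_log_iff :
    ∫ x, f x * log (g x) ∂μ = ∫ x, f x * log (f x) ∂μ ↔ f =ᵐ[μ] g := by
  obtain ⟨hint, hval⟩ := integral_mul_klFun_div hgf hfi hgi hflogf hflogg hfg
  have hnonneg : 0 ≤ᵐ[μ] fun x => g x * klFun (f x / g x) :=
    hf0.and hg0 |>.mono fun x ⟨hf, hg⟩ => mul_klFun_div_nonneg hf hg
  rw [eq_comm, ← sub_eq_zero, ← hval, integral_eq_zero_iff_of_nonneg_ae hnonneg hint]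
  exact Filter.eventually_congr <| (hf0.and hg0).and hgf |>.mono
    fun x ⟨⟨hf, hg⟩, hgf⟩ => mul_klFun_div_eq_zero_iff hf hg hgf

end Gibbs

noncomputable def marginalFst {X Y : Type*} [MeasurableSpace Y] (ν : Measure Y) (f : X × Y → ℝ)
    (x : X) : ℝ :=
  ∫ y, f (x, y) ∂ν

noncomputable def marginalSnd {X Y : Type*} [MeasurableSpace X] (μ : Measure X) (f : X × Y → ℝ)
    (y : Y) : ℝ :=
  ∫ x, f (x, y) ∂μ

lemma marginalFst_nonneg {X Y : Type*} [MeasurableSpace Y] {ν : Measure Y} {f : X × Y → ℝ}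
    (hf0 : ∀ z, 0 ≤ f z) (x : X) : 0 ≤ marginalFst ν f x :=
  integral_nonneg fun _ => hf0 _

lemma marginalSnd_nonneg {X Y : Type*} [MeasurableSpace X] {μ : Measure X} {f : X × Y → ℝ}
    (hf0 : ∀ z, 0 ≤ f z) (y : Y) : 0 ≤ marginalSnd μ f y :=
  integral_nonneg fun _ => hf0 _

section Marginal

variable {X Y : Type*} [MeasurableSpace X] [MeasurableSpace Y] {μ : Measure X} {ν : Measure Y}
  {f : X × Y → ℝ}

lemma Measurable.marginalFst [SFinite ν] (hfm : Measurable f) : Measurable (marginalFst ν f) :=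
  hfm.stronglyMeasurable.integral_prod_right'.measurable

lemma Measurable.marginalSnd [SFinite μ] (hfm : Measurable f) : Measurable (marginalSnd μ f) :=
  (hfm.comp measurable_swap).marginalFst

lemma MeasureTheory.Integrable.marginalFst [SFinite ν] (hfi : Integrable f (μ.prod ν)) :
    Integrable (marginalFst ν f) μ :=
  hfi.integral_prod_left

variable [SFinite μ] [SFinite ν]

lemma MeasureTheory.Integrable.marginalSnd (hfi : Integrable f (μ.prod ν)) :
    Integrable (marginalSnd μ f) ν :=
  hfi.swap.integral_prod_left

lemma integral_marginalFst (hfi : Integrable f (μ.prod ν)) :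
    ∫ x, marginalFst ν f x ∂μ = ∫ z, f z ∂(μ.prod ν) :=
  (integral_prod f hfi).symm

lemma integral_marginalSnd (hfi : Integrable f (μ.prod ν)) :
    ∫ y, marginalSnd μ f y ∂ν = ∫ z, f z ∂(μ.prod ν) :=
  (integral_prod_symm f hfi).symm

lemma ae_eq_zero_of_marginalFst_eq_zero (hfm : Measurable f) (hf0 : ∀ z, 0 ≤ f z)
    (hfi : Integrable f (μ.prod ν)) :
    ∀ᵐ z ∂(μ.prod ν), marginalFst ν f z.1 = 0 → f z = 0 := by
  have hs : MeasurableSet {z : X × Y | marginalFst ν f z.1 = 0 → f z = 0} :=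
    .imp (measurableSet_eq_fun (hfm.marginalFst.comp measurable_fst) measurable_const)
      (measurableSet_eq_fun hfm measurable_const)
  rw [Measure.ae_prod_iff_ae_ae hs]
  filter_upwards [hfi.prod_right_ae] with x hx
  exact Filter.eventually_imp_distrib_left.2 (integral_eq_zero_iff_of_nonneg (fun _ => hf0 _) hx).1

lemma ae_eq_zero_of_marginalSnd_eq_zero (hfm : Measurable f) (hf0 : ∀ z, 0 ≤ f z)
    (hfi : Integrable f (μ.prod ν)) :
    ∀ᵐ z ∂(μ.prod ν), marginalSnd μ f z.2 = 0 → f z = 0 :=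
  Measure.measurePreserving_swap.quasiMeasurePreserving.ae <|
    ae_eq_zero_of_marginalFst_eq_zero (hfm.comp measurable_swap) (fun _ => hf0 _) hfi.swap

lemma integrable_mul_comp_fst {h : X → ℝ} (hf0 : ∀ z, 0 ≤ f z) (hfi : Integrable f (μ.prod ν))
    (hh : AEStronglyMeasurable h μ) (hfh : Integrable (fun x => marginalFst ν f x * h x) μ) :
    Integrable (fun z => f z * h z.1) (μ.prod ν) := by
  refine (integrable_prod_iff (f := fun z => f z * h z.1) (hfi.1.mul hh.comp_fst)).2
    ⟨hfi.prod_right_ae.mono fun x hx => hx.mul_const (h x),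
      hfh.norm.congr (ae_of_all _ fun x => ?_)⟩
  dsimp only
  rw [norm_mul, Real.norm_of_nonneg (marginalFst_nonneg hf0 x), marginalFst, ← integral_mul_const]
  simp only [norm_mul, Real.norm_of_nonneg (hf0 _)]

lemma integral_mul_comp_fst {h : X → ℝ} (hfi : Integrable (fun z => f z * h z.1) (μ.prod ν)) :
    ∫ z, f z * h z.1 ∂(μ.prod ν) = ∫ x, marginalFst ν f x * h x ∂μ := by
  simp only [integral_prod _ hfi, integral_mul_const, marginalFst]

lemma integrable_mul_comp_snd {h : Y → ℝ} (hf0 : ∀ z, 0 ≤ f z) (hfi : Integrable f (μ.prod ν))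
    (hh : AEStronglyMeasurable h ν) (hfh : Integrable (fun y => marginalSnd μ f y * h y) ν) :
    Integrable (fun z => f z * h z.2) (μ.prod ν) :=
  integrable_swap_iff.1 <| integrable_mul_comp_fst (fun _ => hf0 _) hfi.swap hh hfh

lemma integral_mul_comp_snd {h : Y → ℝ} (hfi : Integrable (fun z => f z * h z.2) (μ.prod ν)) :
    ∫ z, f z * h z.2 ∂(μ.prod ν) = ∫ y, marginalSnd μ f y * h y ∂ν := by
  simp only [integral_prod_symm _ hfi, integral_mul_const, marginalSnd]

section LogMarginalProd

variable (hfm : Measurable f) (hf0 : ∀ z, 0 ≤ f z) (hfi : Integrable f (μ.prod ν))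
  (hX : Integrable (fun x => marginalFst ν f x * log (marginalFst ν f x)) μ)
  (hY : Integrable (fun y => marginalSnd μ f y * log (marginalSnd μ f y)) ν)
include hfm hf0 hfi

lemma mul_log_marginal_prod_ae_eq :
    (fun z => f z * log (marginalFst ν f z.1 * marginalSnd μ f z.2)) =ᵐ[μ.prod ν]
      fun z => f z * log (marginalFst ν f z.1) + f z * log (marginalSnd μ f z.2) := by
  filter_upwards [ae_eq_zero_of_marginalFst_eq_zero hfm hf0 hfi,
    ae_eq_zero_of_marginalSnd_eq_zero hfm hf0 hfi] with z hX hY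
  rcases eq_or_ne (f z) 0 with hz | hz
  · simp [hz]
  · rw [log_mul (mt hX hz) (mt hY hz), mul_add]

include hX hY

lemma integrable_mul_log_marginal_prod :
    Integrable (fun z => f z * log (marginalFst ν f z.1 * marginalSnd μ f z.2)) (μ.prod ν) :=
  ((integrable_mul_comp_fst hf0 hfi hfm.marginalFst.log.aestronglyMeasurable hX).add
    (integrable_mul_comp_snd hf0 hfi hfm.marginalSnd.log.aestronglyMeasurable
      hY)).congr (mul_log_marginal_prod_ae_eq hfm hf0 hfi).symm

lemma integral_mul_log_marginal_prod :
    ∫ z, f z * log (marginalFst ν f z.1 * marginalSnd μ f z.2) ∂(μ.prod ν) =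
      ∫ x, marginalFst ν f x * log (marginalFst ν f x) ∂μ +
        ∫ y, marginalSnd μ f y * log (marginalSnd μ f y) ∂ν := by
  have hiX := integrable_mul_comp_fst hf0 hfi
    hfm.marginalFst.log.aestronglyMeasurable hX
  have hiY := integrable_mul_comp_snd hf0 hfi
    hfm.marginalSnd.log.aestronglyMeasurable hY
  rw [integral_congr_ae (mul_log_marginal_prod_ae_eq hfm hf0 hfi), integral_add hiX hiY]
  exact congrArg₂ (· + ·) (integral_mul_comp_fst (h := fun x => log (marginalFst ν f x)) hiX)
    (integral_mul_comp_snd (h := fun y => log (marginalSnd μ f y)) hiY)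

end LogMarginalProd

end Marginal

/-- Subadditivity of the Gibbs entropy `S[f] = -∫ f log f`: for a probability density `f`
on a product space with marginals `fX`, `fY`, one has `S[f] ≤ S[fX] + S[fY]`, with
equality iff `f(x,y) = fX x * fY y` almost everywhere (probabilistic independence). -/
theorem entropy_subadditive {X Y : Type*} [MeasurableSpace X] [MeasurableSpace Y]
    (μ : Measure X) (ν : Measure Y) [SigmaFinite μ] [SigmaFinite ν]
    (f : X × Y → ℝ) (hfm : Measurable f) (hf0 : ∀ z, 0 ≤ f z)
    (hfi : Integrable f (μ.prod ν)) (hf1 : (∫ z, f z ∂(μ.prod ν)) = 1)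
    (fX : X → ℝ) (hfX : ∀ x, fX x = ∫ y, f (x, y) ∂ν)
    (fY : Y → ℝ) (hfY : ∀ y, fY y = ∫ x, f (x, y) ∂μ)
    (hSf : Integrable (fun z => f z * Real.log (f z)) (μ.prod ν))
    (hSfX : Integrable (fun x => fX x * Real.log (fX x)) μ)
    (hSfY : Integrable (fun y => fY y * Real.log (fY y)) ν) :
    (-∫ z, f z * Real.log (f z) ∂(μ.prod ν)) ≤
      (-∫ x, fX x * Real.log (fX x) ∂μ) + (-∫ y, fY y * Real.log (fY y) ∂ν) ∧
    ((-∫ z, f z * Real.log (f z) ∂(μ.prod ν)) =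
      (-∫ x, fX x * Real.log (fX x) ∂μ) + (-∫ y, fY y * Real.log (fY y) ∂ν) ↔
      f =ᵐ[μ.prod ν] fun z => fX z.1 * fY z.2) := by
  obtain rfl : fX = marginalFst ν f := funext hfX
  obtain rfl : fY = marginalSnd μ f := funext hfY
  have hg0 : ∀ᵐ z ∂(μ.prod ν), 0 ≤ marginalFst ν f z.1 * marginalSnd μ f z.2 :=
    ae_of_all _ fun z => mul_nonneg (marginalFst_nonneg hf0 _) (marginalSnd_nonneg hf0 _)
  have hgf : ∀ᵐ z ∂(μ.prod ν), marginalFst ν f z.1 * marginalSnd μ f z.2 = 0 → f z = 0 := by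
    filter_upwards [ae_eq_zero_of_marginalFst_eq_zero hfm hf0 hfi,
      ae_eq_zero_of_marginalSnd_eq_zero hfm hf0 hfi] with z hX hY hg
    exact (mul_eq_zero.1 hg).elim hX hY
  have hfg : ∫ z, f z ∂(μ.prod ν) = ∫ z, marginalFst ν f z.1 * marginalSnd μ f z.2 ∂(μ.prod ν) := by
    rw [integral_prod_mul, integral_marginalFst hfi, integral_marginalSnd hfi, hf1, one_mul]
  have hgi := hfi.marginalFst.mul_prod hfi.marginalSnd
  have hflogg := integrable_mul_log_marginal_prod hfm hf0 hfi hSfX hSfY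
  have hle :=
    integral_mul_log_le_integral_mul_log_s6 (ae_of_all _ hf0) hg0 hgf hfi hgi hSf hflogg hfg
  have hiff :=
    integral_mul_log_eq_integral_mul_log_iff (ae_of_all _ hf0) hg0 hgf hfi hgi hSf hflogg hfg
  rw [integral_mul_log_marginal_prod hfm hf0 hfi hSfX hSfY] at hle hiff
  rw [← hiff]
  exact ⟨by linarith, fun h => by linarith, fun h => by linarith⟩
end

section
/- Let (X, μ) be a σ-finite measure space, let f_1, …, f_n be probability densities on X with f_i·log f_i μ-integrable, and let p_1, …, p_n be positive reals with ∑_{i=1}^n p_i = 1; set f̄ = ∑_{i=1}^n p_i f_i. Assume the densities are distinguishable, i.e., the supports {x : f_i(x) > 0} are pairwise disjoint up to μ-null sets. Then S[f_i ‖ f̄] = -log p_i for each i, and consequently S[f̄] = ∑_{i=1}^n p_i S[f_i] - ∑_{i=1}^n p_i log p_i. -/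
open MeasureTheory Real Finset

/-!
Distinguishability means that almost every point lies in the support of at most one `f i`.
At such a point the mixture `f̄ = ∑ p j f j` reduces to a single term `p i f i`, so
`f i log (f i / f̄) = -log (p i) f i` and `f̄ log f̄ = ∑ (f i · p i log p i + p i · f i log f i)`,
the latter because `t ↦ t log t` vanishes at `0` and `(p t) log (p t) = t · p log p + p · t log t`.
Integrating these identities against `μ`, with `∫ f i = 1`, gives both formulas.
-/

theorem mul_log_mul (x y : ℝ) :
    x * y * log (x * y) = y * (x * log x) + x * (y * log y) := by
  have h := negMulLog_mul x y
  simp only [negMulLog] at h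
  linarith

theorem Pairwise.eq_zero_of_ne_zero {ι M : Type*} [Zero M] {b : ι → M}
    (hb : Pairwise fun i j => b i = 0 ∨ b j = 0) {i : ι} (hi : b i ≠ 0) :
    ∀ j, j ≠ i → b j = 0 :=
  fun _ hj => (hb hj).resolve_right hi

section Pointwise

variable {ι : Type*} [Fintype ι]

theorem map_sum_of_pairwise_eq_zero {M N : Type*} [AddCommMonoid M] [AddCommMonoid N]
    {φ : M → N} (hφ : φ 0 = 0) {b : ι → M} (hb : Pairwise fun i j => b i = 0 ∨ b j = 0) :
    φ (∑ j, b j) = ∑ j, φ (b j) := by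
  by_cases h : ∃ i, b i ≠ 0
  · obtain ⟨i, hi⟩ := h
    have hzero := hb.eq_zero_of_ne_zero hi
    rw [sum_eq_single i (fun j _ hj => hzero j hj) (by simp),
      sum_eq_single i (fun j _ hj => by rw [hzero j hj, hφ]) (by simp)]
  · push Not at h
    simp [h, hφ]

variable (p : ι → ℝ) {a : ι → ℝ} (ha : Pairwise fun i j => a i = 0 ∨ a j = 0)
include ha

theorem mul_log_div_sum_of_pairwise_eq_zero (i : ι) :
    a i * log (a i / ∑ j, p j * a j) = -log (p i) * a i := by
  rcases eq_or_ne (a i) 0 with hi | hi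
  · simp [hi]
  have hsum : ∑ j, p j * a j = p i * a i :=
    sum_eq_single i (fun j _ hj => by rw [ha.eq_zero_of_ne_zero hi j hj, mul_zero]) (by simp)
  rw [hsum, div_mul_cancel_right₀ hi, log_inv, mul_comm]

theorem sum_mul_log_sum_of_pairwise_eq_zero :
    (∑ j, p j * a j) * log (∑ j, p j * a j) =
      ∑ j, (a j * (p j * log (p j)) + p j * (a j * log (a j))) := by
  have hpa : Pairwise fun i j => p i * a i = 0 ∨ p j * a j = 0 := fun i j hij =>
    (ha hij).imp (fun h => by rw [h, mul_zero]) (fun h => by rw [h, mul_zero])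
  rw [map_sum_of_pairwise_eq_zero (φ := fun t : ℝ => t * log t) (by simp) hpa]
  exact sum_congr rfl fun j _ => mul_log_mul (p j) (a j)

end Pointwise

section Mixture

variable {X ι : Type*} [MeasurableSpace X] {μ : Measure X} {f : ι → X → ℝ}

theorem ae_pairwise_eq_zero_of_measure_pos_inter_eq_zero [Countable ι]
    (hf0 : ∀ i x, 0 ≤ f i x)
    (hdisj : ∀ i j, i ≠ j → μ ({x | 0 < f i x} ∩ {x | 0 < f j x}) = 0) :
    ∀ᵐ x ∂μ, Pairwise fun i j => f i x = 0 ∨ f j x = 0 := by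
  simp only [Pairwise, ae_all_iff]
  intro i j hij
  filter_upwards [measure_eq_zero_iff_ae_notMem.mp (hdisj i j hij)] with x hx
  simp only [Set.mem_inter_iff, Set.mem_ofPred_eq, not_and_or, not_lt] at hx
  exact hx.imp (fun h => h.antisymm (hf0 i x)) (fun h => h.antisymm (hf0 j x))

variable [Fintype ι] (p : ι → ℝ) (hae : ∀ᵐ x ∂μ, Pairwise fun i j => f i x = 0 ∨ f j x = 0)
include hae

theorem integral_mul_log_div_mixture {i : ι} (hf1 : ∫ x, f i x ∂μ = 1) :
    ∫ x, f i x * log (f i x / ∑ j, p j * f j x) ∂μ = -log (p i) := by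
  rw [integral_congr_ae (hae.mono fun x hx => mul_log_div_sum_of_pairwise_eq_zero p hx i),
    integral_const_mul, hf1, mul_one]

theorem integral_mixture_mul_log_mixture (hfi : ∀ i, Integrable (f i) μ)
    (hf1 : ∀ i, ∫ x, f i x ∂μ = 1) (hSf : ∀ i, Integrable (fun x => f i x * log (f i x)) μ) :
    ∫ x, (∑ j, p j * f j x) * log (∑ j, p j * f j x) ∂μ =
      ∑ j, (p j * log (p j) + p j * ∫ x, f j x * log (f j x) ∂μ) := by
  rw [integral_congr_ae (hae.mono fun x hx => sum_mul_log_sum_of_pairwise_eq_zero p hx),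
    integral_finsetSum _ fun j _ => ((hfi j).mul_const _).fun_add ((hSf j).const_mul _)]
  refine sum_congr rfl fun j _ => ?_
  rw [integral_add ((hfi j).mul_const _) ((hSf j).const_mul _), integral_mul_const,
    integral_const_mul, hf1 j, one_mul]

end Mixture

theorem entropy_of_distinguishable_mixture_general {X : Type*} [MeasurableSpace X]
    (μ : Measure X)
    (n : ℕ) (f : Fin n → X → ℝ) (p : Fin n → ℝ)
    (hf0 : ∀ i x, 0 ≤ f i x)
    (hfi : ∀ i, Integrable (f i) μ) (hf1 : ∀ i, (∫ x, f i x ∂μ) = 1)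
    (fbar : X → ℝ) (hfbar : fbar = fun x => ∑ i, p i * f i x)
    (hSf : ∀ i, Integrable (fun x => f i x * Real.log (f i x)) μ)
    (hdisj : ∀ i j, i ≠ j → μ ({x | 0 < f i x} ∩ {x | 0 < f j x}) = 0) :
    (∀ i, (∫ x, f i x * Real.log (f i x / fbar x) ∂μ) = -Real.log (p i)) ∧
    (-∫ x, fbar x * Real.log (fbar x) ∂μ) =
      (∑ i, p i * (-∫ x, f i x * Real.log (f i x) ∂μ)) -
      ∑ i, p i * Real.log (p i) := by
  subst hfbar
  have hae := ae_pairwise_eq_zero_of_measure_pos_inter_eq_zero hf0 hdisj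
  refine ⟨fun i => integral_mul_log_div_mixture p hae (hf1 i), ?_⟩
  rw [integral_mixture_mul_log_mixture p hae hfi hf1 hSf, sum_add_distrib]
  simp only [mul_neg, sum_neg_distrib]
  ring

/-- Mixture of distinguishable states: if the probability densities `f i` have pairwise
disjoint supports up to `μ`-null sets, then for the mixture `f̄ = ∑ p i • f i` the
relative entropies are `S[f i ‖ f̄] = -log (p i)`, and consequently
`S[f̄] = ∑ p i S[f i] - ∑ p i log (p i)`, where `S[f] = -∫ f log f dμ` and
`S[f ‖ g] = ∫ f log (f/g) dμ`. -/
theorem entropy_of_distinguishable_mixture {X : Type*} [MeasurableSpace X]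
    (μ : Measure X) [SigmaFinite μ]
    (n : ℕ) (f : Fin n → X → ℝ) (p : Fin n → ℝ)
    (hfm : ∀ i, Measurable (f i)) (hf0 : ∀ i x, 0 ≤ f i x)
    (hfi : ∀ i, Integrable (f i) μ) (hf1 : ∀ i, (∫ x, f i x ∂μ) = 1)
    (hp : ∀ i, 0 < p i) (hps : ∑ i, p i = 1)
    (fbar : X → ℝ) (hfbar : fbar = fun x => ∑ i, p i * f i x)
    (hSf : ∀ i, Integrable (fun x => f i x * Real.log (f i x)) μ)
    (hdisj : ∀ i j, i ≠ j → μ ({x | 0 < f i x} ∩ {x | 0 < f j x}) = 0) :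
    (∀ i, (∫ x, f i x * Real.log (f i x / fbar x) ∂μ) = -Real.log (p i)) ∧
    (-∫ x, fbar x * Real.log (fbar x) ∂μ) =
      (∑ i, p i * (-∫ x, f i x * Real.log (f i x) ∂μ)) -
      ∑ i, p i * Real.log (p i) :=
  entropy_of_distinguishable_mixture_general μ n f p hf0 hfi hf1 fbar hfbar hSf hdisj
end
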